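/- arXiv:2107.05961 — 2 statements merged into one kernel-verified Lean document; each statement's English description precedes it below -/
import Mathlib

section
/- Let $\gamma_0$ and $\gamma_1$ be Hermitian $6 \times 6$ complex matrices and $\epsilon \in [0,1]$. Let $\lambda_1^\psi \geq \dots \geq \lambda_6^\psi$ be the decreasing eigenvalues of $\gamma_0$ and assume they satisfy the Borland–Dennis conditions $\lambda_1^\psi + \lambda_2^\psi + \lambda_4^\psi \leq 2$ and $\lambda_1^\psi + \lambda_6^\psi = \lambda_2^\psi + \lambda_5^\psi = \lambda_3^\psi + \lambda_4^\psi = 1$. Assume every eigenvalue of $\gamma_1$ lies in $[0,1]$. Then the decreasing eigenvalues $\lambda_1 \geq \dots \geq \lambda_6$ of $\gamma = (1-\epsilon)\gamma_0 + \epsilon\gamma_1$ satisfy the slightly weakened Borland–Dennis conditions $\lambda_1 + \lambda_2 - \lambda_3 \leq 1 + \epsilon$ and $\lambda_1 + \lambda_2 + \lambda_4 \leq 2 + \epsilon$. -/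
/-!
Since the eigenvalues of `γ₁` lie in `[0, 1]`, the Loewner order gives
`(1 - ε) γ₀ ≤ γ ≤ (1 - ε) γ₀ + ε`, hence for the sorted eigenvalues
`(1 - ε) λₖ^ψ ≤ λₖ ≤ (1 - ε) λₖ^ψ + ε`. Each such comparison is the min–max principle: the span
of the top `k + 1` eigenvectors of one operator meets the span of the bottom `d - k` eigenvectors
of the other, and both quadratic forms evaluated at a common nonzero vector compare the `k`-th
eigenvalues. Inserting these bounds into `λ₁ + λ₂ - λ₃` and `λ₁ + λ₂ + λ₄` and using
`λ₁^ψ + λ₂^ψ + λ₄^ψ ≤ 2` and `λ₃^ψ + λ₄^ψ = 1` gives the claim.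
-/

open Module Submodule
open scoped InnerProductSpace

namespace OrthonormalBasis

variable {𝕜 E ι : Type*} [RCLike 𝕜] [NormedAddCommGroup E] [InnerProductSpace 𝕜 E] [Fintype ι]
  (b : OrthonormalBasis ι 𝕜 E) {T : E →ₗ[𝕜] E} {μ : ι → ℝ}

theorem re_inner_apply_self_eq_sum (hb : ∀ i, T (b i) = (μ i : 𝕜) • b i) (x : E) :
    RCLike.re ⟪x, T x⟫_𝕜 = ∑ i, μ i * ‖⟪b i, x⟫_𝕜‖ ^ 2 := by
  have hTx : T x = ∑ i, (μ i * ⟪b i, x⟫_𝕜 : 𝕜) • b i := by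
    conv_lhs => rw [← b.sum_repr' x]
    simp only [map_sum, map_smul, hb, smul_smul, mul_comm]
  rw [hTx, inner_sum, map_sum]
  refine Finset.sum_congr rfl fun i _ => ?_
  rw [inner_smul_right, ← inner_conj_symm x (b i), mul_assoc, RCLike.mul_conj]
  norm_cast

theorem inner_eq_zero_of_mem_span_image {s : Set ι} {x : E} (hx : x ∈ span 𝕜 (b '' s))
    {j : ι} (hj : j ∉ s) : ⟪b j, x⟫_𝕜 = 0 := by
  refine mem_orthogonal_singleton_iff_inner_right.1 (span_le.2 ?_ hx)
  rintro _ ⟨i, hi, rfl⟩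
  exact mem_orthogonal_singleton_iff_inner_right.2
    (b.orthonormal.inner_eq_zero (ne_of_mem_of_not_mem hi hj).symm)

theorem re_inner_apply_self_le_of_mem_span (hb : ∀ i, T (b i) = (μ i : 𝕜) • b i) {s : Set ι}
    {c : ℝ} (hc : ∀ i ∈ s, μ i ≤ c) {x : E} (hx : x ∈ span 𝕜 (b '' s)) :
    RCLike.re ⟪x, T x⟫_𝕜 ≤ c * ‖x‖ ^ 2 := by
  rw [b.re_inner_apply_self_eq_sum hb, ← b.sum_sq_norm_inner_right, Finset.mul_sum]
  refine Finset.sum_le_sum fun i _ => ?_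
  by_cases hi : i ∈ s
  · exact mul_le_mul_of_nonneg_right (hc i hi) (by positivity)
  · simp [b.inner_eq_zero_of_mem_span_image hx hi]

theorem le_re_inner_apply_self_of_mem_span (hb : ∀ i, T (b i) = (μ i : 𝕜) • b i) {s : Set ι}
    {c : ℝ} (hc : ∀ i ∈ s, c ≤ μ i) {x : E} (hx : x ∈ span 𝕜 (b '' s)) :
    c * ‖x‖ ^ 2 ≤ RCLike.re ⟪x, T x⟫_𝕜 := by
  rw [b.re_inner_apply_self_eq_sum hb, ← b.sum_sq_norm_inner_right, Finset.mul_sum]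
  refine Finset.sum_le_sum fun i _ => ?_
  by_cases hi : i ∈ s
  · exact mul_le_mul_of_nonneg_right (hc i hi) (by positivity)
  · simp [b.inner_eq_zero_of_mem_span_image hx hi]

theorem finrank_span_image_finset (s : Finset ι) : finrank 𝕜 (span 𝕜 (b '' s)) = s.card := by
  have h := finrank_span_eq_card
    (b.orthonormal.linearIndependent.comp ((↑) : s → ι) Subtype.val_injective)
  rw [Function.comp_def, Fintype.card_coe] at h
  rwa [Set.image_eq_range]

theorem exists_ne_zero_eigenvalue_le_and_le_eigenvalue {d : ℕ}
    (b₁ b₂ : OrthonormalBasis (Fin d) 𝕜 E) {T₁ T₂ : E →ₗ[𝕜] E} {μ₁ μ₂ : Fin d → ℝ}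
    (hb₁ : ∀ i, T₁ (b₁ i) = (μ₁ i : 𝕜) • b₁ i)
    (hb₂ : ∀ i, T₂ (b₂ i) = (μ₂ i : 𝕜) • b₂ i) (hμ₁ : Antitone μ₁) (hμ₂ : Antitone μ₂)
    (k : Fin d) :
    ∃ x ≠ 0, μ₁ k * ‖x‖ ^ 2 ≤ RCLike.re ⟪x, T₁ x⟫_𝕜 ∧ RCLike.re ⟪x, T₂ x⟫_𝕜 ≤ μ₂ k * ‖x‖ ^ 2 := by
  set V := span 𝕜 (b₁ '' (Finset.Iic k : Set (Fin d)))
  set W := span 𝕜 (b₂ '' (Finset.Ici k : Set (Fin d)))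
  have : FiniteDimensional 𝕜 E := b₁.toBasis.finiteDimensional_of_finite
  have hVW : ¬Disjoint V W := fun h => by
    have := finrank_add_finrank_le_of_disjoint h
    rw [b₁.finrank_span_image_finset, b₂.finrank_span_image_finset, Fin.card_Iic, Fin.card_Ici,
      finrank_eq_card_basis b₁.toBasis, Fintype.card_fin] at this
    omega
  obtain ⟨x, hxV, hxW, hx⟩ : ∃ x ∈ V, x ∈ W ∧ x ≠ 0 := by
    simpa [disjoint_def] using hVW
  exact ⟨x, hx,
    b₁.le_re_inner_apply_self_of_mem_span hb₁ (fun i hi => hμ₁ (by simpa using hi)) hxV,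
    b₂.re_inner_apply_self_le_of_mem_span hb₂ (fun i hi => hμ₂ (by simpa using hi)) hxW⟩

end OrthonormalBasis

namespace Matrix.IsHermitian

variable {𝕜 : Type*} [RCLike 𝕜]

section Fintype

variable {n : Type*} [Fintype n] [DecidableEq n] {A : Matrix n n 𝕜} (hA : A.IsHermitian)

theorem toEuclideanLin_eigenvectorBasis (j : n) :
    toEuclideanLin A (hA.eigenvectorBasis j) = (hA.eigenvalues j : 𝕜) • hA.eigenvectorBasis j := by
  ext i
  simpa [Matrix.toLpLin_apply] using congrFun (hA.mulVec_eigenvectorBasis j) i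

theorem re_inner_toEuclideanLin_le {c : ℝ} (hc : ∀ i, hA.eigenvalues i ≤ c)
    (x : EuclideanSpace 𝕜 n) : RCLike.re ⟪x, toEuclideanLin A x⟫_𝕜 ≤ c * ‖x‖ ^ 2 :=
  hA.eigenvectorBasis.re_inner_apply_self_le_of_mem_span hA.toEuclideanLin_eigenvectorBasis
    (s := Set.univ) (fun i _ => hc i) (by simpa using hA.eigenvectorBasis.toBasis.mem_span x)

theorem le_re_inner_toEuclideanLin {c : ℝ} (hc : ∀ i, c ≤ hA.eigenvalues i)
    (x : EuclideanSpace 𝕜 n) : c * ‖x‖ ^ 2 ≤ RCLike.re ⟪x, toEuclideanLin A x⟫_𝕜 :=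
  hA.eigenvectorBasis.le_re_inner_apply_self_of_mem_span hA.toEuclideanLin_eigenvectorBasis
    (s := Set.univ) (fun i _ => hc i) (by simpa using hA.eigenvectorBasis.toBasis.mem_span x)

end Fintype

theorem re_inner_toEuclideanLin_smul_add_smul {n : Type*} [Fintype n] [DecidableEq n]
    (A B : Matrix n n 𝕜) (s t : ℝ) (x : EuclideanSpace 𝕜 n) :
    RCLike.re ⟪x, toEuclideanLin (s • A + t • B) x⟫_𝕜
      = s * RCLike.re ⟪x, toEuclideanLin A x⟫_𝕜 + t * RCLike.re ⟪x, toEuclideanLin B x⟫_𝕜 := by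
  simp only [RCLike.real_smul_eq_coe_smul (K := 𝕜), map_add, map_smul, LinearMap.add_apply,
    LinearMap.smul_apply, inner_add_right, inner_smul_right, RCLike.re_ofReal_mul]

variable {d : ℕ} {A B : Matrix (Fin d) (Fin d) 𝕜} (hA : A.IsHermitian) (hB : B.IsHermitian)
  {σ τ : Equiv.Perm (Fin d)}

theorem exists_ne_zero_eigenvalue_le_and_le_eigenvalue (hσ : Antitone (hA.eigenvalues ∘ σ))
    (hτ : Antitone (hB.eigenvalues ∘ τ)) (k : Fin d) :
    ∃ x ≠ 0, hA.eigenvalues (σ k) * ‖x‖ ^ 2 ≤ RCLike.re ⟪x, toEuclideanLin A x⟫_𝕜 ∧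
      RCLike.re ⟪x, toEuclideanLin B x⟫_𝕜 ≤ hB.eigenvalues (τ k) * ‖x‖ ^ 2 :=
  OrthonormalBasis.exists_ne_zero_eigenvalue_le_and_le_eigenvalue
    (hA.eigenvectorBasis.reindex σ.symm) (hB.eigenvectorBasis.reindex τ.symm)
    (fun i => by simpa using hA.toEuclideanLin_eigenvectorBasis (σ i))
    (fun i => by simpa using hB.toEuclideanLin_eigenvectorBasis (τ i)) hσ hτ k

theorem eigenvalue_smul_add_smul_le {s t : ℝ} (hs : 0 ≤ s) (ht : 0 ≤ t)
    (hB₁ : ∀ i, hB.eigenvalues i ≤ 1) (hC : (s • A + t • B).IsHermitian)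
    (hσ : Antitone (hA.eigenvalues ∘ σ)) (hτ : Antitone (hC.eigenvalues ∘ τ)) (k : Fin d) :
    hC.eigenvalues (τ k) ≤ s * hA.eigenvalues (σ k) + t := by
  obtain ⟨x, hx, hCx, hAx⟩ := hC.exists_ne_zero_eigenvalue_le_and_le_eigenvalue hA hτ hσ k
  have hBx := hB.re_inner_toEuclideanLin_le hB₁ x
  rw [re_inner_toEuclideanLin_smul_add_smul] at hCx
  have hx2 : 0 < ‖x‖ ^ 2 := by positivity
  refine le_of_mul_le_mul_right ?_ hx2
  linarith [mul_le_mul_of_nonneg_left hAx hs, mul_le_mul_of_nonneg_left hBx ht]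

theorem mul_eigenvalue_le_eigenvalue_smul_add_smul {s t : ℝ} (hs : 0 ≤ s) (ht : 0 ≤ t)
    (hB₀ : ∀ i, 0 ≤ hB.eigenvalues i) (hC : (s • A + t • B).IsHermitian)
    (hσ : Antitone (hA.eigenvalues ∘ σ)) (hτ : Antitone (hC.eigenvalues ∘ τ)) (k : Fin d) :
    s * hA.eigenvalues (σ k) ≤ hC.eigenvalues (τ k) := by
  obtain ⟨x, hx, hAx, hCx⟩ := hA.exists_ne_zero_eigenvalue_le_and_le_eigenvalue hC hσ hτ k
  have hBx := hB.le_re_inner_toEuclideanLin hB₀ x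
  rw [re_inner_toEuclideanLin_smul_add_smul] at hCx
  have hx2 : 0 < ‖x‖ ^ 2 := by positivity
  refine le_of_mul_le_mul_right ?_ hx2
  linarith [mul_le_mul_of_nonneg_left hAx hs, mul_le_mul_of_nonneg_left hBx ht]

end Matrix.IsHermitian

theorem stmt1_general (γ₀ γ₁ : Matrix (Fin 6) (Fin 6) ℂ)
    (hγ₀ : γ₀.IsHermitian) (hγ₁ : γ₁.IsHermitian)
    (ε : ℝ) (hε : ε ∈ Set.Icc (0 : ℝ) 1)
    (lamψ : Fin 6 → ℝ) (σ : Equiv.Perm (Fin 6))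
    (hlamψ : lamψ = hγ₀.eigenvalues ∘ σ) (hlamψ_anti : Antitone lamψ)
    (hBD1 : lamψ 0 + lamψ 1 + lamψ 3 ≤ 2)
    (hBD4 : lamψ 2 + lamψ 3 = 1)
    (hγ₁ev : ∀ i, hγ₁.eigenvalues i ∈ Set.Icc (0 : ℝ) 1)
    (hγ : ((1 - ε) • γ₀ + ε • γ₁).IsHermitian)
    (lam : Fin 6 → ℝ) (τ : Equiv.Perm (Fin 6))
    (hlam : lam = hγ.eigenvalues ∘ τ) (hlam_anti : Antitone lam) :
    lam 0 + lam 1 - lam 2 ≤ 1 + ε ∧ lam 0 + lam 1 + lam 3 ≤ 2 + ε := by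
  obtain ⟨hε₀, hε₁⟩ := hε
  subst hlamψ hlam
  have upper (k : Fin 6) : hγ.eigenvalues (τ k) ≤ (1 - ε) * hγ₀.eigenvalues (σ k) + ε :=
    hγ₀.eigenvalue_smul_add_smul_le hγ₁ (by linarith) hε₀ (fun i => (hγ₁ev i).2) hγ
      hlamψ_anti hlam_anti k
  have lower (k : Fin 6) : (1 - ε) * hγ₀.eigenvalues (σ k) ≤ hγ.eigenvalues (τ k) :=
    hγ₀.mul_eigenvalue_le_eigenvalue_smul_add_smul hγ₁ (by linarith) hε₀ (fun i => (hγ₁ev i).1)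
      hγ hlamψ_anti hlam_anti k
  simp only [Function.comp_apply] at hBD1 hBD4 ⊢
  have h1ε : 0 ≤ 1 - ε := by linarith
  constructor
  · linarith [upper 0, upper 1, lower 2, mul_le_mul_of_nonneg_left hBD1 h1ε,
      congrArg ((1 - ε) * ·) hBD4]
  · linarith [upper 0, upper 1, upper 3, mul_le_mul_of_nonneg_left hBD1 h1ε]

/-- Slightly weakened Borland–Dennis conditions for the 1-RDM of a slightly mixed state:
if `γ₀` is Hermitian `6 × 6` with decreasing eigenvalues `lamψ` satisfying the
Borland–Dennis conditions, `γ₁` is Hermitian with all eigenvalues in `[0,1]`, and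
`ε ∈ [0,1]`, then the decreasing eigenvalues `lam` of `γ = (1-ε) • γ₀ + ε • γ₁` satisfy
`λ₁ + λ₂ - λ₃ ≤ 1 + ε` and `λ₁ + λ₂ + λ₄ ≤ 2 + ε`.
(Indices are 0-based: `lam 0 = λ₁`, …, `lam 5 = λ₆`; the decreasingly ordered eigenvalues
are encoded as antitone enumerations obtained from Mathlib's eigenvalues by a permutation.) -/
theorem stmt1 (γ₀ γ₁ : Matrix (Fin 6) (Fin 6) ℂ)
    (hγ₀ : γ₀.IsHermitian) (hγ₁ : γ₁.IsHermitian)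
    (ε : ℝ) (hε : ε ∈ Set.Icc (0 : ℝ) 1)
    (lamψ : Fin 6 → ℝ) (σ : Equiv.Perm (Fin 6))
    (hlamψ : lamψ = hγ₀.eigenvalues ∘ σ) (hlamψ_anti : Antitone lamψ)
    (hBD1 : lamψ 0 + lamψ 1 + lamψ 3 ≤ 2)
    (hBD2 : lamψ 0 + lamψ 5 = 1) (hBD3 : lamψ 1 + lamψ 4 = 1) (hBD4 : lamψ 2 + lamψ 3 = 1)
    (hγ₁ev : ∀ i, hγ₁.eigenvalues i ∈ Set.Icc (0 : ℝ) 1)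
    (hγ : ((1 - ε) • γ₀ + ε • γ₁).IsHermitian)
    (lam : Fin 6 → ℝ) (τ : Equiv.Perm (Fin 6))
    (hlam : lam = hγ.eigenvalues ∘ τ) (hlam_anti : Antitone lam) :
    lam 0 + lam 1 - lam 2 ≤ 1 + ε ∧ lam 0 + lam 1 + lam 3 ≤ 2 + ε :=
  stmt1_general γ₀ γ₁ hγ₀ hγ₁ ε hε lamψ σ hlamψ hlamψ_anti hBD1 hBD4 hγ₁ev hγ lam τ hlam hlam_anti
end

section
/- For every $\epsilon \in [0, \tfrac{1}{2}]$, the vector $\vec{\lambda} = (1, 1, 1-\epsilon, \epsilon, 0, 0)$ satisfies $1 \geq \lambda_1 \geq \lambda_2 \geq \dots \geq \lambda_6 \geq 0$, $\sum_{i=1}^6 \lambda_i = 3$, and saturates both weakened Borland–Dennis inequalities: $\lambda_1 + \lambda_2 - \lambda_3 = 1 + \epsilon$ and $\lambda_1 + \lambda_2 + \lambda_4 = 2 + \epsilon$. Moreover, the diagonal matrix $\mathrm{diag}(1,1,1-\epsilon,\epsilon,0,0)$ equals $(1-\epsilon)\,\mathrm{diag}(1,1,1,0,0,0) + \epsilon\,\mathrm{diag}(1,1,0,1,0,0)$,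 where the decreasing eigenvalues of $\mathrm{diag}(1,1,1,0,0,0)$ satisfy the Borland–Dennis conditions $\lambda_1 + \lambda_2 + \lambda_4 \leq 2$ and $\lambda_1 + \lambda_6 = \lambda_2 + \lambda_5 = \lambda_3 + \lambda_4 = 1$, and all eigenvalues of $\mathrm{diag}(1,1,0,1,0,0)$ lie in $[0,1]$. -/
/-- Sharpness of the weakened Borland–Dennis inequalities: for every `ε ∈ [0, 1/2]`, the
vector `λ = (1, 1, 1-ε, ε, 0, 0)` is decreasing with entries in `[0,1]`, sums to `3`, and
saturates both weakened Borland–Dennis inequalities (`λ₁+λ₂-λ₃ = 1+ε` and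
`λ₁+λ₂+λ₄ = 2+ε`); moreover the diagonal 1-RDM `diag(1,1,1-ε,ε,0,0)` decomposes as
`(1-ε) • diag(1,1,1,0,0,0) + ε • diag(1,1,0,1,0,0)`, where the decreasing eigenvalues
`(1,1,1,0,0,0)` of the first matrix satisfy the Borland–Dennis conditions and all
eigenvalues `(1,1,0,1,0,0)` of the second lie in `[0,1]`.
(Indices are 0-based, and the eigenvalues of a diagonal matrix are its diagonal entries.) -/
theorem stmt3 (ε : ℝ) (hε : ε ∈ Set.Icc (0 : ℝ) (1 / 2))
    (v v₀ v₁ : Fin 6 → ℝ)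
    (hv : v = ![1, 1, 1 - ε, ε, 0, 0])
    (hv₀ : v₀ = ![1, 1, 1, 0, 0, 0])
    (hv₁ : v₁ = ![1, 1, 0, 1, 0, 0]) :
    (∀ i : Fin 6, v i ∈ Set.Icc (0 : ℝ) 1) ∧
    Antitone v ∧
    (∑ i : Fin 6, v i) = 3 ∧
    v 0 + v 1 - v 2 = 1 + ε ∧
    v 0 + v 1 + v 3 = 2 + ε ∧
    (Matrix.diagonal (fun i => ((v i : ℝ) : ℂ)) =
      ((1 - ε : ℝ) : ℂ) • Matrix.diagonal (fun i => ((v₀ i : ℝ) : ℂ)) +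
        (ε : ℂ) • Matrix.diagonal (fun i => ((v₁ i : ℝ) : ℂ))) ∧
    (v₀ 0 + v₀ 1 + v₀ 3 ≤ 2 ∧ v₀ 0 + v₀ 5 = 1 ∧ v₀ 1 + v₀ 4 = 1 ∧ v₀ 2 + v₀ 3 = 1) ∧
    (∀ i : Fin 6, v₁ i ∈ Set.Icc (0 : ℝ) 1) := by
  obtain ⟨h0, h1⟩ := hε
  have e0 : v 0 = 1 := by rw [hv]; rfl
  have e1 : v 1 = 1 := by rw [hv]; rfl
  have e2 : v 2 = 1 - ε := by rw [hv]; rfl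
  have e3 : v 3 = ε := by rw [hv]; rfl
  have e4 : v 4 = 0 := by rw [hv]; rfl
  have e5 : v 5 = 0 := by rw [hv]; rfl
  have f0 : v₀ 0 = 1 := by rw [hv₀]; rfl
  have f1 : v₀ 1 = 1 := by rw [hv₀]; rfl
  have f2 : v₀ 2 = 1 := by rw [hv₀]; rfl
  have f3 : v₀ 3 = 0 := by rw [hv₀]; rfl
  have f4 : v₀ 4 = 0 := by rw [hv₀]; rfl
  have f5 : v₀ 5 = 0 := by rw [hv₀]; rfl
  have g0 : v₁ 0 = 1 := by rw [hv₁]; rfl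
  have g1 : v₁ 1 = 1 := by rw [hv₁]; rfl
  have g2 : v₁ 2 = 0 := by rw [hv₁]; rfl
  have g3 : v₁ 3 = 1 := by rw [hv₁]; rfl
  have g4 : v₁ 4 = 0 := by rw [hv₁]; rfl
  have g5 : v₁ 5 = 0 := by rw [hv₁]; rfl
  have m0 : v 0 ∈ Set.Icc (0 : ℝ) 1 := by rw [e0]; constructor <;> norm_num
  have m1 : v 1 ∈ Set.Icc (0 : ℝ) 1 := by rw [e1]; constructor <;> norm_num
  have m2 : v 2 ∈ Set.Icc (0 : ℝ) 1 := by rw [e2]; constructor <;> linarith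
  have m3 : v 3 ∈ Set.Icc (0 : ℝ) 1 := by rw [e3]; constructor <;> linarith
  have m4 : v 4 ∈ Set.Icc (0 : ℝ) 1 := by rw [e4]; constructor <;> norm_num
  have m5 : v 5 ∈ Set.Icc (0 : ℝ) 1 := by rw [e5]; constructor <;> norm_num
  have n0 : v₁ 0 ∈ Set.Icc (0 : ℝ) 1 := by rw [g0]; constructor <;> norm_num
  have n1 : v₁ 1 ∈ Set.Icc (0 : ℝ) 1 := by rw [g1]; constructor <;> norm_num
  have n2 : v₁ 2 ∈ Set.Icc (0 : ℝ) 1 := by rw [g2]; constructor <;> norm_num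
  have n3 : v₁ 3 ∈ Set.Icc (0 : ℝ) 1 := by rw [g3]; constructor <;> norm_num
  have n4 : v₁ 4 ∈ Set.Icc (0 : ℝ) 1 := by rw [g4]; constructor <;> norm_num
  have n5 : v₁ 5 ∈ Set.Icc (0 : ℝ) 1 := by rw [g5]; constructor <;> norm_num
  have a0 : v 1 ≤ v 0 := by rw [e0, e1]
  have a1 : v 2 ≤ v 1 := by rw [e1, e2]; linarith
  have a2 : v 3 ≤ v 2 := by rw [e2, e3]; linarith
  have a3 : v 4 ≤ v 3 := by rw [e3, e4]; linarith
  have a4 : v 5 ≤ v 4 := by rw [e4, e5]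
  refine ⟨?_, ?_, ?_, ?_, ?_, ?_, ?_, ?_⟩
  · intro i
    fin_cases i
    · exact m0
    · exact m1
    · exact m2
    · exact m3
    · exact m4
    · exact m5
  · rw [Fin.antitone_iff_succ_le]
    intro i
    fin_cases i
    · exact a0
    · exact a1
    · exact a2
    · exact a3
    · exact a4
  · rw [Fin.sum_univ_six, e0, e1, e2, e3, e4, e5]; ring
  · rw [e0, e1, e2]; ring
  · rw [e0, e1, e3]; ring
  · ext i j
    rcases eq_or_ne i j with rfl | h
    · simp only [Matrix.diagonal_apply_eq, Matrix.add_apply, Matrix.smul_apply, smul_eq_mul]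
      have c0 : v 0 = (1 - ε) * v₀ 0 + ε * v₁ 0 := by rw [e0, f0, g0]; ring
      have c1 : v 1 = (1 - ε) * v₀ 1 + ε * v₁ 1 := by rw [e1, f1, g1]; ring
      have c2 : v 2 = (1 - ε) * v₀ 2 + ε * v₁ 2 := by rw [e2, f2, g2]; ring
      have c3 : v 3 = (1 - ε) * v₀ 3 + ε * v₁ 3 := by rw [e3, f3, g3]; ring
      have c4 : v 4 = (1 - ε) * v₀ 4 + ε * v₁ 4 := by rw [e4, f4, g4]; ring
      have c5 : v 5 = (1 - ε) * v₀ 5 + ε * v₁ 5 := by rw [e5, f5, g5]; ring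
      have cr : v i = (1 - ε) * v₀ i + ε * v₁ i := by
        fin_cases i
        · exact c0
        · exact c1
        · exact c2
        · exact c3
        · exact c4
        · exact c5
      rw [cr]; push_cast; ring
    · simp [Matrix.diagonal_apply_ne _ h]
  · rw [f0, f1, f2, f3, f4, f5]; norm_num
  · intro i
    fin_cases i
    · exact n0
    · exact n1
    · exact n2
    · exact n3
    · exact n4
    · exact n5
end
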